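/- arXiv:math/9903204 — 2 statements merged into one kernel-verified Lean document; each statement's English description precedes it below -/
import Mathlib

section
/- Let G be a topological group and let T ⊆ G be a compact connected subset containing the identity. Suppose T is contained in a countable union ⋃_{m∈ℕ} (A + t_m) of translates of a closed subgroup A ⊆ G, where each A + t_m is closed and T is a Baire space. Then T is contained in a single translate A + t_m for some m; moreover, if the identity lies in T, then T ⊆ A. -/
/-!
Pass to the quotient `G ⧸ A`, which is Hausdorff because `A` is closed. The image of `T` is
compact and connected, and it is countable because it lies in the set of classes of the `t m`.
A compact Hausdorff space is completely regular, and a countable completely regular space is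
totally separated (a continuous real function on it takes countably many values), so the connected image is a single point:
the class of `0`. Thus `T ⊆ A`, and `A` is itself one of the translates since `0 ∈ T`.
-/

open Set

theorem IsCompact.subsingleton_of_isPreconnected_of_countable {X : Type*} [TopologicalSpace X]
    [T2Space X] {s : Set X} (hcomp : IsCompact s) (hconn : IsPreconnected s)
    (hcount : s.Countable) : s.Subsingleton := by
  have : CompactSpace s := isCompact_iff_compactSpace.mp hcomp
  have : Countable s := hcount.to_subtype
  have : PreconnectedSpace s := Subtype.preconnectedSpace hconn
  exact subsingleton_coe s |>.mp subsingleton_of_preconnected_totallyDisconnected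

namespace QuotientAddGroup

variable {G : Type*} [AddCommGroup G] {A : AddSubgroup G}

theorem mk_add_right_eq {a : G} (ha : a ∈ A) (g : G) : ((a + g : G) : G ⧸ A) = g := by
  rw [QuotientAddGroup.eq]
  simpa using A.neg_mem ha

theorem image_mk_subset_range_of_subset_iUnion {ι : Type*} {t : ι → G} {s : Set G}
    (hs : s ⊆ ⋃ i, (· + t i) '' (A : Set G)) :
    ((↑) '' s : Set (G ⧸ A)) ⊆ range fun i => (t i : G ⧸ A) := by
  rintro _ ⟨x, hx, rfl⟩
  obtain ⟨i, a, ha, rfl⟩ := mem_iUnion.mp (hs hx)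
  exact ⟨i, (mk_add_right_eq ha (t i)).symm⟩

end QuotientAddGroup

theorem AddSubgroup.image_add_right_of_mem {G : Type*} [AddGroup G] (A : AddSubgroup G) {g : G}
    (hg : g ∈ A) : (· + g) '' (A : Set G) = A := by
  rw [image_add_right]
  ext x
  exact A.add_mem_cancel_right (A.neg_mem hg)

theorem stmt1_general {G : Type*} [AddCommGroup G] [TopologicalSpace G] [IsTopologicalAddGroup G]
    (A : AddSubgroup G) (hA : IsClosed (A : Set G)) (t : ℕ → G)
    (T : Set G) (hTcompact : IsCompact T) (hTconn : IsConnected T) (h0 : (0 : G) ∈ T)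
    (hcover : T ⊆ ⋃ m, (fun a => a + t m) '' (A : Set G)) :
    (∃ m, T ⊆ (fun a => a + t m) '' (A : Set G)) ∧ T ⊆ (A : Set G) := by
  have : IsClosed (A : Set G) := hA
  let q : G → G ⧸ A := (↑)
  have hq : Continuous q := continuous_quot_mk
  have hsub : (q '' T).Subsingleton :=
    (hTcompact.image hq).subsingleton_of_isPreconnected_of_countable
      (hTconn.isPreconnected.image q hq.continuousOn)
      ((countable_range _).mono (QuotientAddGroup.image_mk_subset_range_of_subset_iUnion hcover))
  have hTA : T ⊆ A := fun x hx =>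
    (QuotientAddGroup.eq_zero_iff x).mp (hsub (mem_image_of_mem q hx) (mem_image_of_mem q h0))
  obtain ⟨m, hm⟩ := QuotientAddGroup.image_mk_subset_range_of_subset_iUnion hcover
    (mem_image_of_mem q h0)
  have htm : t m ∈ A := (QuotientAddGroup.eq_zero_iff (t m)).mp hm
  exact ⟨⟨m, by rwa [A.image_add_right_of_mem htm]⟩, hTA⟩

/-- A compact connected subset `T` of an (abelian) topological group
containing the identity, which is a Baire space and is covered by countably many
closed translates `A + t m` of a closed subgroup `A`, is contained in a single
translate; moreover since `0 ∈ T`, `T ⊆ A`. -/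
theorem stmt1 {G : Type*} [AddCommGroup G] [TopologicalSpace G] [IsTopologicalAddGroup G]
    (A : AddSubgroup G) (hA : IsClosed (A : Set G)) (t : ℕ → G)
    (T : Set G) (hTcompact : IsCompact T) (hTconn : IsConnected T) (h0 : (0 : G) ∈ T)
    (hclosed : ∀ m, IsClosed ((fun a => a + t m) '' (A : Set G)))
    (hBaire : BaireSpace T)
    (hcover : T ⊆ ⋃ m, (fun a => a + t m) '' (A : Set G)) :
    (∃ m, T ⊆ (fun a => a + t m) '' (A : Set G)) ∧ T ⊆ (A : Set G) :=
  stmt1_general A hA t T hTcompact hTconn h0 hcover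
end

section
/- Let H be a finite-dimensional complex vector space with a real structure (complex conjugation fixing a real form H_ℝ), and let F ⊆ H be a complex subspace with H = F ⊕ F̄ where F̄ is the conjugate of F. Let 0 → H → E → Q → 0 be an exact sequence of complex vector spaces and suppose s_H : Q → E is a splitting. Then there exists a unique splitting s : Q_ℝ → E (defined on a real form Q_ℝ of Q, assuming E and Q also carry compatible real structures and the sequence is defined over ℝ) such that s is both 'Hodge' modulo F (i.e., s ≡ s_H mod Hom(Q, F)) and real (i.e., s(Q_ℝ) ⊆ E_ℝ). -/
/-! Splittings that are Hodge modulo `F` are exactly `s_H + i ∘ a` with `a ∈ Hom(Q, F)`, and such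
a splitting is real iff `a - ā = δ`, where `ā = σ ∘ a ∘ σ` and `i ∘ δ = s̄_H - s_H` measures how far
`s_H` is from being real. Now `δ̄ = -δ` and `Hom(Q, H) = Hom(Q, F) ⊕ conj Hom(Q, F)`; writing
`δ = a + b̄` with `a, b ∈ Hom(Q, F)`, the relation `δ̄ = -δ` forces `b = -a`, which gives existence.
A difference of two solutions is a real element of `Hom(Q, F) ∩ conj Hom(Q, F) = 0`. -/

open LinearMap Submodule

section Complement

variable {R M : Type*} [Ring R] {τ : R →+* R} [RingHomSurjective τ]
  [AddCommGroup M] [Module R M]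

theorem Submodule.existsUnique_sub_eq_of_isCompl_map {T : M →ₛₗ[τ] M}
    (hT : Function.Involutive T) {A : Submodule R M} (hA : IsCompl A (A.map T))
    {δ : M} (hδ : T δ = -δ) : ∃! a, a ∈ A ∧ a - T a = δ := by
  have hdisj := disjoint_def.mp hA.disjoint
  obtain ⟨a, ha, _, ⟨b, hb, rfl⟩, rfl⟩ := mem_sup.mp (hA.sup_eq_top ▸ mem_top : δ ∈ A ⊔ A.map T)
  rw [map_add, hT] at hδ
  have hTb : T b = -T a := by
    have hab : a + b = 0 := by
      refine hdisj _ (A.add_mem ha hb) ⟨-(a + b), A.neg_mem (A.add_mem ha hb), ?_⟩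
      rw [map_neg, map_add]
      linear_combination (norm := module) -hδ
    rw [eq_neg_of_add_eq_zero_right hab, map_neg]
  refine ⟨a, ⟨ha, by rw [hTb, sub_eq_add_neg]⟩, fun a' ⟨ha', h⟩ => ?_⟩
  have hfix : T (a' - a) = a' - a := by
    rw [map_sub]
    linear_combination (norm := module) -h - hTb
  exact sub_eq_zero.mp (hdisj _ (A.sub_mem ha' ha) ⟨a' - a, A.sub_mem ha' ha, hfix⟩)

theorem Submodule.isCompl_map_of_forall_exists_eq_add {σ : M →ₛₗ[τ] M} {F : Submodule R M}
    (hspan : ∀ v, ∃ f ∈ F, ∃ g ∈ F, v = f + σ g)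
    (huniq : ∀ f ∈ F, ∀ g ∈ F, f + σ g = 0 → f = 0) : IsCompl F (F.map σ) := by
  refine ⟨disjoint_def.mpr fun v hv ⟨g, hg, hgv⟩ => huniq v hv (-g) (F.neg_mem hg) ?_,
    codisjoint_iff.mpr (eq_top_iff.mpr fun v _ => ?_)⟩
  · rw [map_neg, hgv, add_neg_cancel]
  · obtain ⟨f, hf, g, hg, rfl⟩ := hspan v
    exact add_mem_sup hf (mem_map_of_mem hg)

end Complement

section HomInto

variable {R V W : Type*} [CommRing R] [AddCommGroup V] [Module R V] [AddCommGroup W] [Module R W]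

theorem Submodule.mem_compatibleMaps_top {F : Submodule R V} {f : W →ₗ[R] V} :
    f ∈ compatibleMaps ⊤ F ↔ ∀ w, f w ∈ F := by
  simp [compatibleMaps, SetLike.le_def]

theorem Submodule.isCompl_compatibleMaps_top {F G : Submodule R V} (h : IsCompl F G) :
    IsCompl (compatibleMaps ⊤ F : Submodule R (W →ₗ[R] V)) (compatibleMaps ⊤ G) := by
  constructor
  · refine disjoint_def.mpr fun f hF hG => LinearMap.ext fun w => ?_
    exact disjoint_def.mp h.disjoint _
      (mem_compatibleMaps_top.mp hF w) (mem_compatibleMaps_top.mp hG w)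
  · rw [codisjoint_iff, eq_top_iff]
    intro f _
    rw [← LinearMap.id_comp f, ← projection_add_projection_eq_id h, LinearMap.add_comp]
    exact add_mem_sup (mem_compatibleMaps_top.mpr fun w => by simp)
      (mem_compatibleMaps_top.mpr fun w => by simp)

end HomInto

section Conj

variable {R V W : Type*} [CommRing R] {τ : R →+* R} [RingHomInvPair τ τ]
  [AddCommGroup V] [Module R V] [AddCommGroup W] [Module R W]

def LinearMap.homConj (σV : V →ₛₗ[τ] V) (σW : W →ₛₗ[τ] W) :
    (W →ₗ[R] V) →ₛₗ[τ] (W →ₗ[R] V) where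
  toFun f := σV ∘ₛₗ f ∘ₛₗ σW
  map_add' f g := by ext; simp
  map_smul' c f := by ext; simp

variable (σV : V →ₛₗ[τ] V) (σW : W →ₛₗ[τ] W)

@[simp]
theorem LinearMap.homConj_apply (f : W →ₗ[R] V) (w : W) : homConj σV σW f w = σV (f (σW w)) :=
  rfl

variable {σV σW}

theorem LinearMap.homConj_involutive (hV : Function.Involutive σV) (hW : Function.Involutive σW) :
    Function.Involutive (homConj σV σW) := fun f => by
  ext w; simp [hV _, hW _]

theorem LinearMap.homConj_eq_self_iff (hW : Function.Involutive σW) {f : W →ₗ[R] V} :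
    homConj σV σW f = f ↔ ∀ w, σV (f w) = f (σW w) := by
  refine ⟨fun h w => ?_, fun h => LinearMap.ext fun w => by simp [h, hW w]⟩
  conv_rhs => rw [← h]
  simp [hW w]

theorem Submodule.map_homConj_compatibleMaps_top (hV : Function.Involutive σV)
    (hW : Function.Involutive σW) (F : Submodule R V) :
    (compatibleMaps ⊤ F).map (homConj σV σW) = compatibleMaps ⊤ (F.map σV) := by
  ext g
  simp only [mem_map, mem_compatibleMaps_top]
  constructor
  · rintro ⟨f, hf, rfl⟩ w
    exact ⟨_, hf (σW w), rfl⟩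
  · intro hg
    refine ⟨homConj σV σW g, fun w => ?_, homConj_involutive hV hW g⟩
    obtain ⟨v, hv, hvg⟩ := hg (σW w)
    simpa [← hvg, hV v] using hv

end Conj

section Splitting

variable {R H E Q : Type*} [CommRing R] {τ : R →+* R} [RingHomInvPair τ τ]
  [AddCommGroup H] [Module R H] [AddCommGroup E] [Module R E] [AddCommGroup Q] [Module R Q]
  {σH : H →ₛₗ[τ] H} {σE : E →ₛₗ[τ] E} {σQ : Q →ₛₗ[τ] Q} {i : H →ₗ[R] E} {p : E →ₗ[R] Q}

theorem LinearMap.exists_comp_eq_of_comp_eq_zero (hi : Function.Injective i)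
    (hexact : range i = ker p) {x : Q →ₗ[R] E} (hx : p ∘ₗ x = 0) : ∃ a, i ∘ₗ a = x :=
  ⟨codRestrictOfInjective x i hi fun q => hexact ▸ LinearMap.congr_fun hx q,
    codRestrictOfInjective_comp ..⟩

theorem LinearMap.comp_homConj (hiσ : ∀ x, σE (i x) = i (σH x)) (a : Q →ₗ[R] H) :
    i ∘ₗ homConj σH σQ a = homConj σE σQ (i ∘ₗ a) := by
  ext q; simp [hiσ]

theorem LinearMap.exists_comp_eq_homConj_sub (hi : Function.Injective i)
    (hexact : range i = ker p) (hpσ : ∀ x, σQ (p x) = p (σE x)) (hQ : Function.Involutive σQ)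
    {sH : Q →ₗ[R] E} (hsH : p ∘ₗ sH = .id) : ∃ δ, i ∘ₗ δ = homConj σE σQ sH - sH := by
  refine exists_comp_eq_of_comp_eq_zero hi hexact (LinearMap.ext fun q => ?_)
  have hpsH : ∀ q, p (sH q) = q := LinearMap.congr_fun hsH
  simp [← hpσ, hpsH, hQ q]

theorem LinearMap.homConj_eq_neg_of_comp_eq_homConj_sub (hi : Function.Injective i)
    (hiσ : ∀ x, σE (i x) = i (σH x)) (hE : Function.Involutive σE)
    (hQ : Function.Involutive σQ) {sH : Q →ₗ[R] E} {δ : Q →ₗ[R] H}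
    (hδ : i ∘ₗ δ = homConj σE σQ sH - sH) : homConj σH σQ δ = -δ := by
  rw [← cancel_left hi, comp_homConj hiσ, hδ, map_sub, homConj_involutive hE hQ, comp_neg, hδ,
    neg_sub]

theorem LinearMap.homConj_add_comp_eq_self_iff (hi : Function.Injective i)
    (hiσ : ∀ x, σE (i x) = i (σH x)) {sH : Q →ₗ[R] E} {δ : Q →ₗ[R] H}
    (hδ : i ∘ₗ δ = homConj σE σQ sH - sH) (a : Q →ₗ[R] H) :
    homConj σE σQ (sH + i ∘ₗ a) = sH + i ∘ₗ a ↔ a - homConj σH σQ a = δ := by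
  have hsH : homConj σE σQ sH = sH + i ∘ₗ δ := by rw [hδ]; abel
  rw [map_add, ← comp_homConj hiσ, hsH, add_assoc, add_right_inj, ← comp_add, cancel_left hi,
    sub_eq_iff_eq_add, eq_comm]

theorem LinearMap.exists_mem_compatibleMaps_top_eq_add_comp (hi : Function.Injective i)
    (hexact : range i = ker p) {F : Submodule R H} {t sH : Q →ₗ[R] E}
    (ht : ∀ q, ∃ f ∈ F, t q - sH q = i f) : ∃ a ∈ compatibleMaps ⊤ F, t = sH + i ∘ₗ a := by
  have hpi : p ∘ₗ i = 0 := range_le_ker_iff.mp hexact.le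
  obtain ⟨a, ha⟩ := exists_comp_eq_of_comp_eq_zero hi hexact (x := t - sH) <| LinearMap.ext
    fun q => by obtain ⟨f, -, hf⟩ := ht q; simpa [hf] using LinearMap.congr_fun hpi f
  refine ⟨a, mem_compatibleMaps_top.mpr fun q => ?_, by rw [ha, add_sub_cancel]⟩
  obtain ⟨f, hf, hqf⟩ := ht q
  rwa [hi (LinearMap.congr_fun ha q |>.trans hqf)]

theorem LinearMap.existsUnique_real_splitting_sub_mem {F : Submodule R H}
    (hF : IsCompl F (F.map σH)) (hH : Function.Involutive σH) (hE : Function.Involutive σE)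
    (hQ : Function.Involutive σQ) (hi : Function.Injective i) (hexact : range i = ker p)
    (hiσ : ∀ x, σE (i x) = i (σH x)) (hpσ : ∀ x, σQ (p x) = p (σE x))
    {sH : Q →ₗ[R] E} (hsH : p ∘ₗ sH = .id) :
    ∃! s : Q →ₗ[R] E, p ∘ₗ s = .id ∧ (∀ q, ∃ f ∈ F, s q - sH q = i f) ∧
      ∀ q, σE (s q) = s (σQ q) := by
  obtain ⟨δ, hδ⟩ := exists_comp_eq_homConj_sub hi hexact hpσ hQ hsH
  have hA : IsCompl (compatibleMaps ⊤ F) ((compatibleMaps ⊤ F).map (homConj σH σQ)) := by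
    rw [map_homConj_compatibleMaps_top hH hQ]
    exact isCompl_compatibleMaps_top hF
  obtain ⟨a, ⟨haF, ha⟩, ha_unique⟩ := existsUnique_sub_eq_of_isCompl_map
    (homConj_involutive hH hQ) hA (homConj_eq_neg_of_comp_eq_homConj_sub hi hiσ hE hQ hδ)
  refine ⟨sH + i ∘ₗ a, ⟨?_, fun q => ⟨a q, mem_compatibleMaps_top.mp haF q, by simp⟩, ?_⟩, ?_⟩
  · rw [comp_add, hsH, ← comp_assoc, range_le_ker_iff.mp hexact.le, zero_comp, add_zero]
  · rwa [← homConj_eq_self_iff hQ, homConj_add_comp_eq_self_iff hi hiσ hδ]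
  · rintro t ⟨-, ht_hodge, ht_real⟩
    obtain ⟨a', ha'F, rfl⟩ := exists_mem_compatibleMaps_top_eq_add_comp hi hexact ht_hodge
    rw [← homConj_eq_self_iff hQ, homConj_add_comp_eq_self_iff hi hiσ hδ] at ht_real
    rw [ha_unique a' ⟨ha'F, ht_real⟩]

end Splitting

theorem stmt18_general {H E Q : Type*}
    [AddCommGroup H] [Module ℂ H]
    [AddCommGroup E] [Module ℂ E]
    [AddCommGroup Q] [Module ℂ Q]
    (σH : H → H) (σE : E → E) (σQ : Q → Q)
    (hHadd : ∀ x y, σH (x + y) = σH x + σH y)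
    (hHsmul : ∀ (c : ℂ) x, σH (c • x) = (starRingEnd ℂ c) • σH x)
    (hHinv : ∀ x, σH (σH x) = x)
    (hEadd : ∀ x y, σE (x + y) = σE x + σE y)
    (hEsmul : ∀ (c : ℂ) x, σE (c • x) = (starRingEnd ℂ c) • σE x)
    (hEinv : ∀ x, σE (σE x) = x)
    (hQadd : ∀ x y, σQ (x + y) = σQ x + σQ y)
    (hQsmul : ∀ (c : ℂ) x, σQ (c • x) = (starRingEnd ℂ c) • σQ x)
    (hQinv : ∀ x, σQ (σQ x) = x)
    (F : Submodule ℂ H)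
    (hspan : ∀ v : H, ∃ f ∈ F, ∃ g ∈ F, v = f + σH g)
    (huniq : ∀ f ∈ F, ∀ g ∈ F, f + σH g = 0 → f = 0 ∧ g = 0)
    (i : H →ₗ[ℂ] E) (p : E →ₗ[ℂ] Q)
    (hi : Function.Injective i)
    (hexact : LinearMap.range i = LinearMap.ker p)
    (hicompat : ∀ x, σE (i x) = i (σH x))
    (hpcompat : ∀ x, σQ (p x) = p (σE x))
    (sH : Q →ₗ[ℂ] E) (hsH : p ∘ₗ sH = LinearMap.id) :
    ∃! s : Q →ₗ[ℂ] E, p ∘ₗ s = LinearMap.id ∧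
      (∀ q : Q, ∃ f ∈ F, s q - sH q = i f) ∧
      (∀ q : Q, σE (s q) = s (σQ q)) := by
  let σH' : H →ₗ⋆[ℂ] H := { toFun := σH, map_add' := hHadd, map_smul' := hHsmul }
  let σE' : E →ₗ⋆[ℂ] E := { toFun := σE, map_add' := hEadd, map_smul' := hEsmul }
  let σQ' : Q →ₗ⋆[ℂ] Q := { toFun := σQ, map_add' := hQadd, map_smul' := hQsmul }
  have hF : IsCompl F (F.map σH') :=
    isCompl_map_of_forall_exists_eq_add hspan fun f hf g hg h => (huniq f hf g hg h).1
  exact existsUnique_real_splitting_sub_mem (σE := σE') (σQ := σQ') hF hHinv hEinv hQinv hi hexact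
    hicompat hpcompat hsH

/-- unique real Hodge splitting, from the proof of Lemma 5: Let
`0 → H → E → Q → 0` be an exact sequence of finite-dimensional complex vector spaces
defined over ℝ (all spaces carry antilinear involutions — real structures — and the
maps commute with them), let `F ⊆ H` be a complex subspace with `H = F ⊕ σ(F)`, and
let `s_H : Q → E` be a splitting.  Then there is a unique splitting `s` of the
sequence which is both Hodge modulo `F` (i.e. `s − s_H` takes values in `F`) and real
(i.e. `s` commutes with the real structures). -/
theorem stmt18 {H E Q : Type*}
    [AddCommGroup H] [Module ℂ H] [FiniteDimensional ℂ H]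
    [AddCommGroup E] [Module ℂ E] [FiniteDimensional ℂ E]
    [AddCommGroup Q] [Module ℂ Q] [FiniteDimensional ℂ Q]
    (σH : H → H) (σE : E → E) (σQ : Q → Q)
    (hHadd : ∀ x y, σH (x + y) = σH x + σH y)
    (hHsmul : ∀ (c : ℂ) x, σH (c • x) = (starRingEnd ℂ c) • σH x)
    (hHinv : ∀ x, σH (σH x) = x)
    (hEadd : ∀ x y, σE (x + y) = σE x + σE y)
    (hEsmul : ∀ (c : ℂ) x, σE (c • x) = (starRingEnd ℂ c) • σE x)
    (hEinv : ∀ x, σE (σE x) = x)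
    (hQadd : ∀ x y, σQ (x + y) = σQ x + σQ y)
    (hQsmul : ∀ (c : ℂ) x, σQ (c • x) = (starRingEnd ℂ c) • σQ x)
    (hQinv : ∀ x, σQ (σQ x) = x)
    (F : Submodule ℂ H)
    (hspan : ∀ v : H, ∃ f ∈ F, ∃ g ∈ F, v = f + σH g)
    (huniq : ∀ f ∈ F, ∀ g ∈ F, f + σH g = 0 → f = 0 ∧ g = 0)
    (i : H →ₗ[ℂ] E) (p : E →ₗ[ℂ] Q)
    (hi : Function.Injective i) (hp : Function.Surjective p)
    (hexact : LinearMap.range i = LinearMap.ker p)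
    (hicompat : ∀ x, σE (i x) = i (σH x))
    (hpcompat : ∀ x, σQ (p x) = p (σE x))
    (sH : Q →ₗ[ℂ] E) (hsH : p ∘ₗ sH = LinearMap.id) :
    ∃! s : Q →ₗ[ℂ] E, p ∘ₗ s = LinearMap.id ∧
      (∀ q : Q, ∃ f ∈ F, s q - sH q = i f) ∧
      (∀ q : Q, σE (s q) = s (σQ q)) :=
  stmt18_general σH σE σQ hHadd hHsmul hHinv hEadd hEsmul hEinv hQadd hQsmul hQinv F hspan huniq i p
    hi hexact hicompat hpcompat sH hsH
end
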